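/- Let Γ be a Coxeter graph with canonical root system Φ, and let ≡ be the equivalence relation on Φ generated by α ≡₁ β ⟺ ⟨α,β⟩ ∉ {0,1,-1}. If α_s ≡ α_t for all s,t ∈ S, then all elements of Φ are equivalent under ≡. -/

import Mathlib

/-!
The simple reflections preserve the canonical form and `Φ`, hence so does every `w ∈ W`, and
`w` maps `≡`-related roots to `≡`-related roots. For a simple reflection `σ_u` and any `s`,
`σ_u α_s ≡ σ_u α_u = -α_u ≡ α_u ≡ α_s`, where `-α_u ≡ α_u` because `⟨α_u, -α_u⟩ = -2`.
Induction on `w ∈ W` then gives `w α_s ≡ α_s`, so every root is equivalent to a simple root,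
and all simple roots are equivalent by hypothesis.
-/

open Real

/-- A Coxeter matrix on the set `S`, with `0` representing the label `∞`. -/
structure CoxeterMat (S : Type*) where
  m : S → S → ℕ
  diagonal : ∀ s, m s s = 1
  symmetric : ∀ s t, m s t = m t s
  off_diagonal : ∀ s t, s ≠ t → m s t ≠ 1

namespace CoxeterMat

variable {S : Type*} (M : CoxeterMat S)

/-- The coefficient `⟨α_s, α_t⟩ = -2 cos (π / m_{s,t})`, with value `-2` when `m_{s,t} = ∞`. -/
noncomputable def c (s t : S) : ℝ :=
  if M.m s t = 0 then -2 else -2 * Real.cos (Real.pi / (M.m s t : ℝ))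

/-- The simple root `α_s` in `V = ⊕_{s ∈ S} ℝ α_s`. -/
noncomputable def sroot (s : S) : S →₀ ℝ := Finsupp.single s 1

/-- The canonical bilinear form of the Coxeter graph. -/
noncomputable def bform : (S →₀ ℝ) →ₗ[ℝ] (S →₀ ℝ) →ₗ[ℝ] ℝ :=
  Finsupp.lift _ ℝ S fun s => Finsupp.lift ℝ ℝ S fun t => M.c s t

/-- The simple reflection `σ_s : x ↦ x - ⟨α_s, x⟩ α_s`. -/
noncomputable def sigma (s : S) : (S →₀ ℝ) →ₗ[ℝ] (S →₀ ℝ) :=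
  LinearMap.id - (M.bform (sroot s)).smulRight (sroot s)

/-- The Coxeter group `W`, realized as the subgroup of linear automorphisms of `V`
generated by the simple reflections. -/
noncomputable def Wgrp : Subgroup ((S →₀ ℝ) ≃ₗ[ℝ] (S →₀ ℝ)) :=
  Subgroup.closure {w | ∃ s : S, (w : (S →₀ ℝ) →ₗ[ℝ] (S →₀ ℝ)) = M.sigma s}

/-- The canonical root system `Φ = {w(α_s) | w ∈ W, s ∈ S}`. -/
def Phi : Set (S →₀ ℝ) := {b | ∃ w ∈ M.Wgrp, ∃ s : S, b = w (sroot s)}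

/-- The set of positive roots. -/
def PhiPos : Set (S →₀ ℝ) := {b | b ∈ M.Phi ∧ ∀ s, 0 ≤ b s}

/-- The equivalence relation `≡` on `Φ` generated by `α ≡₁ β ⟺ ⟨α, β⟩ ∉ {0, 1, -1}`. -/
def equivR : (S →₀ ℝ) → (S →₀ ℝ) → Prop :=
  Relation.EqvGen (fun a b => a ∈ M.Phi ∧ b ∈ M.Phi ∧ M.bform a b ∉ ({0, 1, -1} : Set ℝ))

/-- The underlying graph of the Coxeter graph: `s` and `t` are joined iff `m_{s,t} ≥ 3`
(including `m_{s,t} = ∞`). -/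
def graph : SimpleGraph S where
  Adj s t := s ≠ t ∧ M.m s t ≠ 2
  symm := ⟨fun s t h => ⟨h.1.symm, by rw [M.symmetric]; exact h.2⟩⟩
  loopless := ⟨fun s h => h.1 rfl⟩

/-- The action of a permutation of `S` on `V`. -/
noncomputable def permV (g : Equiv.Perm S) : (S →₀ ℝ) ≃ₗ[ℝ] (S →₀ ℝ) :=
  Finsupp.domLCongr g

/-- The set of elements of `W` fixed by the group `G` of symmetries (acting by conjugation
by the corresponding permutations of coordinates). -/
noncomputable def WfixG (G : Subgroup (Equiv.Perm S)) :
    Set ((S →₀ ℝ) ≃ₗ[ℝ] (S →₀ ℝ)) :=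
  {w | w ∈ M.Wgrp ∧ ∀ g ∈ G, permV g * w = w * permV g}

/-- Construct a simply laced Coxeter matrix from an adjacency relation. -/
noncomputable def ofAdj (A : S → S → Prop) (hs : ∀ s t, A s t → A t s)
    (hi : ∀ s, ¬ A s s) : CoxeterMat S where
  m s t := open Classical in if s = t then 1 else if A s t then 3 else 2
  diagonal s := by simp
  symmetric s t := by
    classical
    by_cases h : s = t
    · subst h; rfl
    · have h' : t ≠ s := Ne.symm h
      simp only [if_neg h, if_neg h']
      by_cases hA : A s t
      · rw [if_pos hA, if_pos (hs s t hA)]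
      · rw [if_neg hA, if_neg (fun h2 => hA (hs t s h2))]
  off_diagonal s t h := by
    classical
    simp only [if_neg h]
    split <;> norm_num

/-- Isomorphism of Coxeter graphs. -/
def Iso {T : Type*} (M : CoxeterMat S) (N : CoxeterMat T) : Prop :=
  ∃ e : S ≃ T, ∀ s t, N.m (e s) (e t) = M.m s t

/-- The full Coxeter subgraph spanned by `Y ⊆ S`. -/
def restrict (Y : Set S) : CoxeterMat Y where
  m s t := M.m s t
  diagonal s := M.diagonal s
  symmetric s t := M.symmetric s t
  off_diagonal s t h := M.off_diagonal s t (fun hh => h (Subtype.ext hh))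

end CoxeterMat

open CoxeterMat

/-- The Coxeter graph `A_n`: a path with `n` vertices. -/
noncomputable def pathA (n : ℕ) : CoxeterMat (Fin n) :=
  ofAdj (fun i j => i.val + 1 = j.val ∨ j.val + 1 = i.val)
    (fun _ _ h => h.symm)
    (fun s h => by rcases h with h | h <;> omega)

/-- The Coxeter graph `D_n`: a path `0 — 1 — ⋯ — (n-2)` together with an extra vertex `n-1`
joined to `n-3`. -/
noncomputable def Dmat (n : ℕ) : CoxeterMat (Fin n) :=
  ofAdj (fun i j => i ≠ j ∧
      (((i.val + 1 = j.val ∧ j.val ≤ n - 2) ∨ (i.val + 2 = j.val ∧ j.val = n - 1)) ∨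
       ((j.val + 1 = i.val ∧ i.val ≤ n - 2) ∨ (j.val + 2 = i.val ∧ i.val = n - 1))))
    (fun _ _ h => ⟨h.1.symm, h.2.symm⟩)
    (fun s h => h.1 rfl)

/-- Adjacency relation determined by a list of edges. -/
def listAdj {n : ℕ} (L : List (Fin n × Fin n)) (i j : Fin n) : Prop :=
  (i, j) ∈ L ∨ (j, i) ∈ L

instance {n : ℕ} (L : List (Fin n × Fin n)) (i j : Fin n) : Decidable (listAdj L i j) := by
  unfold listAdj; infer_instance

/-- The Coxeter graph `E₆`. -/
noncomputable def E6mat : CoxeterMat (Fin 6) :=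
  ofAdj (listAdj [(0,2),(2,3),(3,4),(4,5),(1,3)])
    (fun _ _ h => h.symm) (by decide)

/-- The Coxeter graph `E₇`. -/
noncomputable def E7mat : CoxeterMat (Fin 7) :=
  ofAdj (listAdj [(0,2),(2,3),(3,4),(4,5),(5,6),(1,3)])
    (fun _ _ h => h.symm) (by decide)

/-- The Coxeter graph `E₈`. -/
noncomputable def E8mat : CoxeterMat (Fin 8) :=
  ofAdj (listAdj [(0,2),(2,3),(3,4),(4,5),(5,6),(6,7),(1,3)])
    (fun _ _ h => h.symm) (by decide)

/-- The Coxeter graph `A_∞`: the one-sided infinite path. -/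
noncomputable def Ainf : CoxeterMat ℕ :=
  ofAdj (fun i j => i + 1 = j ∨ j + 1 = i)
    (fun _ _ h => h.symm)
    (fun s h => by omega)

/-- The Coxeter graph `_∞A_∞`: the two-sided infinite path. -/
noncomputable def ZAinf : CoxeterMat ℤ :=
  ofAdj (fun i j => i + 1 = j ∨ j + 1 = i)
    (fun _ _ h => h.symm)
    (fun s h => by omega)

/-- The Coxeter graph `D_∞`: vertices `0, 1, 2, 3, …` with `0` and `1` joined to `2` and a
path `2 — 3 — 4 — ⋯`. -/
noncomputable def Dinf : CoxeterMat ℕ :=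
  ofAdj (fun i j => i ≠ j ∧
      (((i = 0 ∧ j = 2) ∨ (i = 1 ∧ j = 2) ∨ (i + 1 = j ∧ 2 ≤ i)) ∨
       ((j = 0 ∧ i = 2) ∨ (j = 1 ∧ i = 2) ∨ (j + 1 = i ∧ 2 ≤ j))))
    (fun _ _ h => ⟨h.1.symm, h.2.symm⟩)
    (fun s h => h.1 rfl)

/-- The affine Coxeter graph `Ã_n`: a cycle with `n + 1` vertices. -/
noncomputable def affA (n : ℕ) : CoxeterMat (ZMod (n + 1)) :=
  ofAdj (fun i j => i ≠ j ∧ (i + 1 = j ∨ j + 1 = i))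
    (fun _ _ h => ⟨h.1.symm, h.2.symm⟩)
    (fun s h => h.1 rfl)

/-- The affine Coxeter graph `D̃_n` (on `n + 1` vertices, Bourbaki numbering): `0` and `1`
joined to `2`, a path `2 — 3 — ⋯ — (n-1)`, and `n` joined to `n-2`. -/
noncomputable def affD (n : ℕ) : CoxeterMat (Fin (n + 1)) :=
  ofAdj (fun i j => i ≠ j ∧
      (((i.val = 0 ∧ j.val = 2) ∨ (i.val = 1 ∧ j.val = 2) ∨
        (i.val + 1 = j.val ∧ 2 ≤ i.val ∧ i.val ≤ n - 2) ∨
        (i.val = n - 2 ∧ j.val = n)) ∨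
       ((j.val = 0 ∧ i.val = 2) ∨ (j.val = 1 ∧ i.val = 2) ∨
        (j.val + 1 = i.val ∧ 2 ≤ j.val ∧ j.val ≤ n - 2) ∨
        (j.val = n - 2 ∧ i.val = n))))
    (fun _ _ h => ⟨h.1.symm, h.2.symm⟩)
    (fun s h => h.1 rfl)

/-- The affine Coxeter graph `Ẽ₆` (Bourbaki numbering, affine vertex `0`). -/
noncomputable def affE6 : CoxeterMat (Fin 7) :=
  ofAdj (listAdj [(1,3),(3,4),(4,5),(5,6),(2,4),(0,2)])
    (fun _ _ h => h.symm) (by decide)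

/-- The affine Coxeter graph `Ẽ₇` (Bourbaki numbering, affine vertex `0`). -/
noncomputable def affE7 : CoxeterMat (Fin 8) :=
  ofAdj (listAdj [(0,1),(1,3),(3,4),(4,5),(5,6),(6,7),(2,4)])
    (fun _ _ h => h.symm) (by decide)

/-- The affine Coxeter graph `Ẽ₈` (Bourbaki numbering, affine vertex `0`). -/
noncomputable def affE8 : CoxeterMat (Fin 9) :=
  ofAdj (listAdj [(1,3),(3,4),(4,5),(5,6),(6,7),(7,8),(2,4),(0,8)])
    (fun _ _ h => h.symm) (by decide)


theorem Relation.EqvGen.map {α β : Type*} {r : α → α → Prop} {p : β → β → Prop} (f : α → β)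
    (hf : ∀ a b, r a b → p (f a) (f b)) {a b : α} (hab : EqvGen r a b) :
    EqvGen p (f a) (f b) := by
  induction hab with
  | rel x y hxy => exact .rel _ _ (hf x y hxy)
  | refl x => exact .refl _
  | symm x y _ ih => exact ih.symm
  | trans x y z _ _ ih₁ ih₂ => exact ih₁.trans _ _ _ ih₂

namespace LinearMap

variable {R M : Type*} [CommSemiring R] [AddCommMonoid M] [Module R M]

def isometrySubgroup (B : M →ₗ[R] M →ₗ[R] R) : Subgroup (M ≃ₗ[R] M) where
  carrier := {w | ∀ x y, B (w x) (w y) = B x y}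
  one_mem' _ _ := rfl
  mul_mem' {v w} hv hw x y := (hv (w x) (w y)).trans (hw x y)
  inv_mem' {w} hw x y := by simpa using (hw (w⁻¹ x) (w⁻¹ y)).symm

end LinearMap

namespace CoxeterMat

variable {S : Type*} (M : CoxeterMat S)

lemma bform_single (s t : S) (a b : ℝ) :
    M.bform (Finsupp.single s a) (Finsupp.single t b) = a * b * M.c s t := by
  simp [bform, Finsupp.lift_apply, Finsupp.sum_single_index]
  ring

lemma c_comm (s t : S) : M.c s t = M.c t s := by
  rw [c, c, M.symmetric]

lemma bform_comm (x y : S →₀ ℝ) : M.bform x y = M.bform y x := by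
  have : M.bform.flip = M.bform := Finsupp.lhom_ext fun s a => Finsupp.lhom_ext fun t b => by
    rw [LinearMap.flip_apply, bform_single, bform_single, c_comm, mul_comm a]
  exact LinearMap.congr_fun₂ this.symm x y

lemma bform_sroot_self (s : S) : M.bform (sroot s) (sroot s) = 2 := by
  simp [sroot, bform_single, c, M.diagonal s, Real.cos_pi]

lemma sigma_apply (s : S) (x : S →₀ ℝ) :
    M.sigma s x = x - M.bform (sroot s) x • sroot s := rfl

lemma sigma_sroot_self (s : S) : M.sigma s (sroot s) = -sroot s := by
  rw [sigma_apply, bform_sroot_self]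
  module

lemma sigma_sigma (s : S) (x : S →₀ ℝ) : M.sigma s (M.sigma s x) = x := by
  simp only [sigma_apply, map_sub, map_smul, bform_sroot_self]
  module

lemma bform_sigma_sigma (s : S) (x y : S →₀ ℝ) :
    M.bform (M.sigma s x) (M.sigma s y) = M.bform x y := by
  simp only [sigma_apply, map_sub, map_smul, LinearMap.sub_apply, LinearMap.smul_apply,
    smul_eq_mul, bform_sroot_self, M.bform_comm x (sroot s)]
  ring

lemma Wgrp_le_isometrySubgroup : M.Wgrp ≤ M.bform.isometrySubgroup :=
  (Subgroup.closure_le _).2 fun w ⟨s, hs⟩ x y => by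
    have h := M.bform_sigma_sigma s x y
    rwa [← hs] at h

lemma bform_apply_apply_of_mem_Wgrp {w : (S →₀ ℝ) ≃ₗ[ℝ] (S →₀ ℝ)} (hw : w ∈ M.Wgrp)
    (x y : S →₀ ℝ) : M.bform (w x) (w y) = M.bform x y :=
  M.Wgrp_le_isometrySubgroup hw x y

lemma sroot_mem_Phi (s : S) : sroot s ∈ M.Phi := ⟨1, one_mem _, s, rfl⟩

lemma apply_mem_Phi {w : (S →₀ ℝ) ≃ₗ[ℝ] (S →₀ ℝ)} (hw : w ∈ M.Wgrp) {b : S →₀ ℝ}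
    (hb : b ∈ M.Phi) : w b ∈ M.Phi := by
  obtain ⟨v, hv, s, rfl⟩ := hb
  exact ⟨w * v, mul_mem hw hv, s, rfl⟩

noncomputable def sigmaEquiv (s : S) : (S →₀ ℝ) ≃ₗ[ℝ] (S →₀ ℝ) :=
  LinearEquiv.ofInvolutive (M.sigma s) (M.sigma_sigma s)

lemma sigmaEquiv_mem_Wgrp (s : S) : M.sigmaEquiv s ∈ M.Wgrp :=
  Subgroup.subset_closure ⟨s, rfl⟩

lemma neg_sroot_mem_Phi (s : S) : -sroot s ∈ M.Phi :=
  ⟨M.sigmaEquiv s, M.sigmaEquiv_mem_Wgrp s, s, (M.sigma_sroot_self s).symm⟩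

lemma equivR_of_mem_Wgrp {w : (S →₀ ℝ) ≃ₗ[ℝ] (S →₀ ℝ)} (hw : w ∈ M.Wgrp) {a b : S →₀ ℝ}
    (hab : M.equivR a b) : M.equivR (w a) (w b) := by
  refine hab.map w fun x y ⟨hx, hy, hxy⟩ => ⟨M.apply_mem_Phi hw hx, M.apply_mem_Phi hw hy, ?_⟩
  rwa [M.bform_apply_apply_of_mem_Wgrp hw]

lemma equivR_neg_sroot (s : S) : M.equivR (sroot s) (-sroot s) := by
  refine .rel _ _ ⟨M.sroot_mem_Phi s, M.neg_sroot_mem_Phi s, ?_⟩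
  rw [map_neg, bform_sroot_self]
  norm_num

lemma equivR_apply_sroot (h : ∀ s t : S, M.equivR (sroot s) (sroot t))
    {w : (S →₀ ℝ) ≃ₗ[ℝ] (S →₀ ℝ)} (hw : w ∈ M.Wgrp) (s : S) :
    M.equivR (w (sroot s)) (sroot s) := by
  induction hw using Subgroup.closure_induction generalizing s with
  | mem v hv =>
    obtain ⟨u, hu⟩ := hv
    have hvu : v (sroot u) = -sroot u := by
      rw [← M.sigma_sroot_self u, ← hu]
      rfl
    have hvs : M.equivR (v (sroot s)) (-sroot u) :=
      hvu ▸ M.equivR_of_mem_Wgrp (Subgroup.subset_closure ⟨u, hu⟩) (h s u)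
    exact hvs.trans _ _ _ ((M.equivR_neg_sroot u).symm.trans _ _ _ (h u s))
  | one => exact .refl _
  | mul a b ha hb iha ihb => exact (M.equivR_of_mem_Wgrp ha (ihb s)).trans _ _ _ (iha s)
  | inv a ha iha =>
    simpa using M.equivR_of_mem_Wgrp (inv_mem ha) (iha s).symm

end CoxeterMat

/-- If all the simple roots are equivalent under `≡`, then all the elements of `Φ` are
equivalent under `≡`. -/
theorem stmt5 {S : Type*} (M : CoxeterMat S)
    (h : ∀ s t : S, M.equivR (sroot s) (sroot t)) :
    ∀ a ∈ M.Phi, ∀ b ∈ M.Phi, M.equivR a b := by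
  rintro a ⟨v, hv, s, rfl⟩ b ⟨w, hw, t, rfl⟩
  exact (M.equivR_apply_sroot h hv s).trans _ _ _
    ((h s t).trans _ _ _ (M.equivR_apply_sroot h hw t).symm)
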